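/- If m_i(f) is even and some component D_j with D_j·A_i ≠ 0 has odd multiplicity, then the number λ of components of odd multiplicity meeting A_i is even and ≥ 2, and the curve S_i^m, a double cover of A_i ≅ ℙ¹ branched exactly over the λ points where odd-multiplicity components meet A_i, is irreducible of genus (λ−2)/2. -/

import Mathlib

open Finset

/-- A double cover of `ℙ¹` branched exactly over `branchPoints` points,
recorded through its numerical invariants (cf. Riemann–Hurwitz; an unbranched
double cover of `ℙ¹` is trivial, a branched one is connected). -/
structure BranchedDoubleCoverOfP1 where
  branchPoints : ℕ
  components : ℕ
  genus : ℕ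
  eulerChar : ℤ
  riemannHurwitz : eulerChar = 2 * 2 - branchPoints
  euler_genus : components = 1 → eulerChar = 2 - 2 * (genus : ℤ)
  comps : components = 1 ∨ components = 2
  disconnected_iff : components = 2 ↔ branchPoints = 0

/-- If `m_i(f)` is even and some component `D_j` with
`D_j·A_i ≠ 0` has odd multiplicity, then the number `λ` of odd-multiplicity
components meeting `A_i` is even and `≥ 2`, and the curve `S_i^m`, a double
cover of `A_i ≅ ℙ¹` branched exactly over these `λ` points, is irreducible
(connected) of genus `(λ−2)/2`. -/
theorem Sim_irreducible_genus (n : ℕ) (i : Fin n)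
    (m : Fin n → ℤ) (A : Fin n → Fin n → ℤ)
    (hA01 : ∀ j, j ≠ i → A j i = 0 ∨ A j i = 1)
    (hmi : Even (m i))
    (hrel : m i * A i i + ∑ j ∈ univ.filter (fun j => j ≠ i), m j * A j i = 0)
    (hodd : ∃ j, j ≠ i ∧ A j i ≠ 0 ∧ Odd (m j))
    (lam : ℕ)
    (hlam : lam = (univ.filter (fun j => j ≠ i ∧ A j i ≠ 0 ∧ Odd (m j))).card)
    (S : BranchedDoubleCoverOfP1) (hS : S.branchPoints = lam) :
    Even lam ∧ 2 ≤ lam ∧ S.components = 1 ∧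
    (S.genus : ℤ) = ((lam : ℤ) - 2) / 2 := by
  -- The sum over j ≠ i is even
  have hsum : Even (∑ j ∈ univ.filter (fun j => j ≠ i), m j * A j i) := by
    have h : ∑ j ∈ univ.filter (fun j => j ≠ i), m j * A j i = -(m i * A i i) := by
      linarith
    rw [h]
    exact (hmi.mul_right _).neg
  -- parity in ZMod 2
  have hcast : (∑ j ∈ univ.filter (fun j => j ≠ i),
      ((m j * A j i : ℤ) : ZMod 2)) = (lam : ZMod 2) := by
    have h1 : ∀ j ∈ univ.filter (fun j : Fin n => j ≠ i),
        ((m j * A j i : ℤ) : ZMod 2)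
          = if A j i ≠ 0 ∧ Odd (m j) then 1 else 0 := by
      intro j hj
      simp only [mem_filter] at hj
      rcases hA01 j hj.2 with h0 | h1
      · simp [h0]
      · have hm : ((m j : ℤ) : ZMod 2) = if Odd (m j) then 1 else 0 := by
          by_cases ho : Odd (m j)
          · simp only [ho, if_true]
            rcases ho with ⟨k, hk⟩
            have h2 : (2 : ZMod 2) = 0 := by decide
            rw [hk]; push_cast; simp [h2]
          · simp only [ho, if_false]
            rw [Int.not_odd_iff_even] at ho
            rw [ZMod.intCast_zmod_eq_zero_iff_dvd]
            exact_mod_cast ho.two_dvd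
        simp [h1, hm]
    rw [Finset.sum_congr rfl h1, Finset.sum_boole, hlam, Finset.filter_filter]
  have hlam_even : Even lam := by
    rcases hsum with ⟨k, hk⟩
    have : ((lam : ℕ) : ZMod 2) = 0 := by
      rw [← hcast, ← Int.cast_sum, hk]
      push_cast
      have h2 : (2 : ZMod 2) = 0 := by decide
      ring_nf
      simp [h2]
    rw [Nat.even_iff, ← Nat.dvd_iff_mod_eq_zero]
    exact (ZMod.natCast_eq_zero_iff _ _).mp this
  have hlam_pos : 1 ≤ lam := by
    obtain ⟨j, hj⟩ := hodd
    rw [hlam]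
    exact Finset.card_pos.mpr ⟨j, by simp [hj.1, hj.2.1, hj.2.2]⟩
  have hlam2 : 2 ≤ lam := by
    rcases hlam_even with ⟨k, hk⟩
    omega
  have hcomp : S.components = 1 := by
    rcases S.comps with h | h
    · exact h
    · exfalso
      have := (S.disconnected_iff.mp h)
      omega
  refine ⟨hlam_even, hlam2, hcomp, ?_⟩
  have h1 := S.euler_genus hcomp
  have h2 := S.riemannHurwitz
  rw [hS] at h2
  rcases hlam_even with ⟨k, hk⟩
  have hkz : (lam : ℤ) = 2 * k := by exact_mod_cast by omega
  omega
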